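/- (Admissibility of the TD-OSR heuristic, Lemma 1.) Let V be a type of vertices, let c : V → V → ℝ → ℝ be a time-dependent edge cost function and c̲ : V → V → ℝ a static edge cost function with 0 ≤ c̲ u v ≤ c u v t for all u, v ∈ V and t ∈ ℝ. Let S_{i+1}, …, S_m ⊆ V be sets of vertices (the remaining categories of interest), let d ∈ V be the destination, and for any set S define L(v, S) as the infimum of static costs of routes from v ending in a vertex of S. Let p = [v₀, …, v_k] be any route with v₀ = v and v_k = d such that there exist indices j_{i+1} ≤ j_{i+2} ≤ … ≤ j_m with v_{j_r} ∈ S_r for each r ∈ {i+1, …, m}, and let the departure times along p be given by t₀ = t and t_{l+1} = t_l + w_l + c v_l v_{l+1} (t_l + w_l) where w_l ≥ 0 is a nonnegative waiting/service time at v_l. Then the total travel time TT(p, t) = Σ_{l<k} c v_l v_{l+1} (t_l + w_l) satisfies TT(p, t) ≥ max { L(v, S_{i+1}), …, L(v, S_m), L(v, {d}) }. In particular, the heuristic h(v, C_q[i+1…m], d) = max { L(v, S_{i+1}), …, L(v, S_m), L(v, {d}) } is a lower bound on the actual optimal remaining cost to travel from v to d through the remaining categories in the specified order. -/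
import Mathlib


/-- The static cost of the route `[p 0, p 1, …, p n]` under the static
edge cost function `cl`. -/
def staticCost {V : Type*} (cl : V → V → ℝ) (p : ℕ → V) (n : ℕ) : ℝ :=
  ∑ i ∈ Finset.range n, cl (p i) (p (i + 1))

/-- `L cl v S` is the infimum of the static costs of all routes that start at `v`
and end at a vertex of `S` (the lower bounds precomputed in the lower-bound graph). -/
noncomputable def L {V : Type*} (cl : V → V → ℝ) (v : V) (S : Set V) : ℝ :=
  sInf {x : ℝ | ∃ (n : ℕ) (p : ℕ → V), p 0 = v ∧ p n ∈ S ∧ x = staticCost cl p n}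

/-- Departure times along a route `p` with waiting/service times `w`:
`t₀ = t` and `t_{l+1} = t_l + w l + c (p l) (p (l+1)) (t_l + w l)`. -/
def arrivalW {V : Type*} (c : V → V → ℝ → ℝ) (p : ℕ → V) (w : ℕ → ℝ) (t : ℝ) : ℕ → ℝ
  | 0 => t
  | l + 1 =>
      arrivalW c p w t l + w l + c (p l) (p (l + 1)) (arrivalW c p w t l + w l)

/-- The total travel time of the route `[p 0, …, p n]` departing at time `t`
with waiting/service times `w` (waiting time is not counted as travel time,
but it shifts subsequent departure times). -/
noncomputable def travelTimeW {V : Type*} (c : V → V → ℝ → ℝ) (p : ℕ → V)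
    (w : ℕ → ℝ) (t : ℝ) (n : ℕ) : ℝ :=
  ∑ l ∈ Finset.range n, c (p l) (p (l + 1)) (arrivalW c p w t l + w l)

lemma L_le_aux
    {V : Type*} (c : V → V → ℝ → ℝ) (cl : V → V → ℝ)
    (hnn : ∀ u v : V, 0 ≤ cl u v)
    (hlb : ∀ u v : V, ∀ t : ℝ, cl u v ≤ c u v t)
    (S : Set V) (v : V) (p : ℕ → V) (k : ℕ) (hstart : p 0 = v)
    (w : ℕ → ℝ) (t : ℝ) (n : ℕ) (hn : n ≤ k) (hmem : p n ∈ S) :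
    L cl v S ≤ travelTimeW c p w t k := by
  have h1 : L cl v S ≤ staticCost cl p n := by
    apply csInf_le
    · refine ⟨0, fun x hx => ?_⟩
      obtain ⟨n', p', _, _, rfl⟩ := hx
      exact Finset.sum_nonneg fun i _ => hnn _ _
    · exact ⟨n, p, hstart, hmem, rfl⟩
  have h2 : staticCost cl p n ≤ staticCost cl p k := by
    unfold staticCost
    exact Finset.sum_le_sum_of_subset_of_nonneg
      (Finset.range_subset_range.mpr hn) (fun i _ _ => hnn _ _)
  have h3 : staticCost cl p k ≤ travelTimeW c p w t k :=
    Finset.sum_le_sum fun i _ => hlb _ _ _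
  linarith

/-- Admissibility of the TD-OSR heuristic (Lemma 1). Suppose `0 ≤ cl u v ≤ c u v t`
for all `u, v, t`. Let `S 0, …, S (m-1)` be the remaining categories and `d` the
destination. For any route `p = [p 0, …, p k]` from `v` to `d` that visits a vertex
of each category `S r` in order (at monotone indices `j r ≤ k`), with nonnegative
waiting times `w`, the total travel time `TT(p, t)` is at least
`max { L(v, S 0), …, L(v, S (m-1)), L(v, {d}) }`, i.e. it is at least `L(v, {d})`
and at least `L(v, S r)` for every `r`. -/
theorem heuristic_admissible
    {V : Type*} (c : V → V → ℝ → ℝ) (cl : V → V → ℝ)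
    (hnn : ∀ u v : V, 0 ≤ cl u v)
    (hlb : ∀ u v : V, ∀ t : ℝ, cl u v ≤ c u v t)
    (m : ℕ) (S : Fin m → Set V) (d v : V)
    (p : ℕ → V) (k : ℕ) (hstart : p 0 = v) (hend : p k = d)
    (w : ℕ → ℝ) (hw : ∀ l, 0 ≤ w l) (t : ℝ)
    (j : Fin m → ℕ) (hjmono : Monotone j) (hjk : ∀ r, j r ≤ k)
    (hjS : ∀ r, p (j r) ∈ S r) :
    L cl v {d} ≤ travelTimeW c p w t k ∧
      ∀ r : Fin m, L cl v (S r) ≤ travelTimeW c p w t k := by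
  constructor
  · exact L_le_aux c cl hnn hlb {d} v p k hstart w t k le_rfl (by simp [hend])
  · exact fun r => L_le_aux c cl hnn hlb (S r) v p k hstart w t (j r) (hjk r) (hjS r)
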